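/- Let X be a right-continuous uniformly integrable martingale and T a predictable stopping time. Then X_{T-} = E[X_T | F_{T-}] = E[X_∞ | F_{T-}] almost surely. -/

import Mathlib

open MeasureTheory Filter Set
open scoped ENNReal NNReal

def UsualConditions {Ω ι : Type*} [Preorder ι] {m : MeasurableSpace Ω}
    (ℱ : MeasureTheory.Filtration ι m) (μ : MeasureTheory.Measure Ω) : Prop :=
  (∀ t, (Set.Ioi t).Nonempty → (ℱ t : MeasurableSpace Ω) = ⨅ s ∈ Set.Ioi t, (ℱ s : MeasurableSpace Ω)) ∧
  (∀ t, ∀ s : Set Ω, μ s = 0 → MeasurableSet[ℱ t] s)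

/-- The σ-field `F_{T-}`. -/
def preSigma {Ω : Type*} {m : MeasurableSpace Ω} (ℱ : Filtration ℝ≥0∞ m)
    (T : Ω → ℝ≥0∞) : MeasurableSpace Ω :=
  (ℱ 0 : MeasurableSpace Ω) ⊔ MeasurableSpace.generateFrom
    {s | ∃ t : ℝ≥0∞, ∃ A : Set Ω, MeasurableSet[ℱ t] A ∧ s = A ∩ {ω | t < T ω}}

def IsPredictableStoppingTime {Ω : Type*} {m : MeasurableSpace Ω}
    (ℱ : Filtration ℝ≥0∞ m) (T : Ω → ℝ≥0∞) : Prop :=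
  IsStoppingTime ℱ (fun ω => (T ω : WithTop ℝ≥0∞)) ∧
    ∃ S : ℕ → Ω → ℝ≥0∞, (∀ n, IsStoppingTime ℱ (fun ω => (S n ω : WithTop ℝ≥0∞))) ∧
      (∀ ω, Monotone fun n => S n ω) ∧
      (∀ ω, Tendsto (fun n => S n ω) atTop (nhds (T ω))) ∧
      (∀ n ω, 0 < T ω → S n ω < T ω)

open scoped Topology

noncomputable section

namespace PST

lemma two_pow_ne_zero (k : ℕ) : ((2 : ℝ≥0∞) ^ k) ≠ 0 := pow_ne_zero k (by norm_num)
lemma two_pow_ne_top (k : ℕ) : ((2 : ℝ≥0∞) ^ k) ≠ ⊤ := ENNReal.pow_ne_top (by norm_num)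

lemma mul_two_pow_eq (k : ℕ) {a : ℝ≥0∞} (ha : a ≠ ⊤) :
    a * 2 ^ k = ENNReal.ofReal (a.toReal * 2 ^ k) := by
  have h : a * 2 ^ k ≠ ⊤ := ENNReal.mul_ne_top ha (two_pow_ne_top k)
  rw [← ENNReal.ofReal_toReal h, ENNReal.toReal_mul, ENNReal.toReal_pow, ENNReal.toReal_ofNat]

/-- Dyadic upper approximation on `ℝ≥0∞`. -/
def dya (k : ℕ) (x : ℝ≥0∞) : ℝ≥0∞ :=
  if x ≤ k then ((⌈x.toReal * 2 ^ k⌉₊ : ℝ≥0∞) / 2 ^ k) else ⊤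

lemma le_dya (k : ℕ) (x : ℝ≥0∞) : x ≤ dya k x := by
  rw [dya]
  split_ifs with h
  · have hx : x ≠ ⊤ := ne_top_of_le_ne_top (ENNReal.natCast_ne_top k) h
    rw [ENNReal.le_div_iff_mul_le (Or.inl (two_pow_ne_zero k)) (Or.inl (two_pow_ne_top k))]
    rw [mul_two_pow_eq k hx, ← ENNReal.ofReal_natCast]
    exact ENNReal.ofReal_le_ofReal (Nat.le_ceil _)
  · exact le_top

lemma dya_le_iff {k : ℕ} {x t : ℝ≥0∞} (ht : t ≠ ⊤) :
    dya k x ≤ t ↔ x ≤ min (k : ℝ≥0∞) ((⌊t.toReal * 2 ^ k⌋₊ : ℝ≥0∞) / 2 ^ k) := by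
  constructor
  · intro hle
    have hxk : x ≤ k := by
      by_contra hc
      rw [dya, if_neg hc] at hle
      exact ht (top_le_iff.mp hle)
    have hx : x ≠ ⊤ := ne_top_of_le_ne_top (ENNReal.natCast_ne_top k) hxk
    rw [dya, if_pos hxk, ENNReal.div_le_iff (two_pow_ne_zero k) (two_pow_ne_top k)] at hle
    refine le_min hxk ?_
    have hreal : (⌈x.toReal * 2 ^ k⌉₊ : ℝ) ≤ t.toReal * 2 ^ k := by
      have h := ENNReal.toReal_mono (ENNReal.mul_ne_top ht (two_pow_ne_top k)) hle
      simpa [ENNReal.toReal_mul] using h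
    have h5 : x.toReal * 2 ^ k ≤ (⌊t.toReal * 2 ^ k⌋₊ : ℝ) :=
      Nat.ceil_le.mp (Nat.le_floor hreal)
    rw [ENNReal.le_div_iff_mul_le (Or.inl (two_pow_ne_zero k)) (Or.inl (two_pow_ne_top k))]
    rw [mul_two_pow_eq k hx, ← ENNReal.ofReal_natCast]
    exact ENNReal.ofReal_le_ofReal h5
  · intro hle
    have hxk : x ≤ k := hle.trans (min_le_left _ _)
    have hx : x ≠ ⊤ := ne_top_of_le_ne_top (ENNReal.natCast_ne_top k) hxk
    rw [dya, if_pos hxk, ENNReal.div_le_iff (two_pow_ne_zero k) (two_pow_ne_top k)]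
    have h5 : x * 2 ^ k ≤ (⌊t.toReal * 2 ^ k⌋₊ : ℝ≥0∞) := by
      have h := hle.trans (min_le_right _ _)
      rwa [ENNReal.le_div_iff_mul_le (Or.inl (two_pow_ne_zero k))
        (Or.inl (two_pow_ne_top k))] at h
    have h5' : x.toReal * 2 ^ k ≤ (⌊t.toReal * 2 ^ k⌋₊ : ℝ) := by
      have h := ENNReal.toReal_mono (ENNReal.natCast_ne_top _) h5
      simpa [ENNReal.toReal_mul] using h
    calc (⌈x.toReal * 2 ^ k⌉₊ : ℝ≥0∞) ≤ (⌊t.toReal * 2 ^ k⌋₊ : ℝ≥0∞) := by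
          exact_mod_cast Nat.ceil_le.mpr h5'
      _ ≤ t * 2 ^ k := by
          rw [mul_two_pow_eq k ht, ← ENNReal.ofReal_natCast]
          exact ENNReal.ofReal_le_ofReal (Nat.floor_le (by positivity))

lemma dya_min_le {k : ℕ} {t : ℝ≥0∞} (ht : t ≠ ⊤) :
    min (k : ℝ≥0∞) ((⌊t.toReal * 2 ^ k⌋₊ : ℝ≥0∞) / 2 ^ k) ≤ t := by
  refine (min_le_right _ _).trans ?_
  rw [ENNReal.div_le_iff (two_pow_ne_zero k) (two_pow_ne_top k), mul_two_pow_eq k ht,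
    ← ENNReal.ofReal_natCast]
  exact ENNReal.ofReal_le_ofReal (Nat.floor_le (by positivity))

lemma dya_antitone (x : ℝ≥0∞) : Antitone fun k => dya k x := by
  refine antitone_nat_of_succ_le fun k => ?_
  by_cases hk : x ≤ k
  · have hk1 : x ≤ ((k + 1 : ℕ) : ℝ≥0∞) := hk.trans (by exact_mod_cast Nat.le_succ k)
    rw [dya, dya, if_pos hk, if_pos hk1]
    have hceil : ⌈x.toReal * 2 ^ (k + 1)⌉₊ ≤ 2 * ⌈x.toReal * 2 ^ k⌉₊ := by
      rw [Nat.ceil_le]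
      push_cast
      calc x.toReal * 2 ^ (k + 1) = x.toReal * 2 ^ k * 2 := by ring
        _ ≤ (⌈x.toReal * 2 ^ k⌉₊ : ℝ) * 2 := by
            have := Nat.le_ceil (x.toReal * 2 ^ k); linarith
        _ = 2 * (⌈x.toReal * 2 ^ k⌉₊ : ℝ) := by ring
    calc ((⌈x.toReal * 2 ^ (k + 1)⌉₊ : ℝ≥0∞)) / 2 ^ (k + 1)
        ≤ ((2 * ⌈x.toReal * 2 ^ k⌉₊ : ℕ) : ℝ≥0∞) / 2 ^ (k + 1) := by
          gcongr
      _ = ((⌈x.toReal * 2 ^ k⌉₊ : ℝ≥0∞)) / 2 ^ k := by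
          push_cast
          rw [pow_succ']
          exact ENNReal.mul_div_mul_left _ _ (by norm_num) (by norm_num)
  · have h : dya k x = ⊤ := by rw [dya, if_neg hk]
    rw [h]; exact le_top

lemma tendsto_dya (x : ℝ≥0∞) : Tendsto (fun k => dya k x) atTop (𝓝 x) := by
  by_cases hx : x = ⊤
  · subst hx
    have h : ∀ k : ℕ, dya k ⊤ = ⊤ := fun k => by
      rw [dya, if_neg (fun h => ENNReal.natCast_ne_top k (top_le_iff.mp h))]
    exact Tendsto.congr (fun k => (h k).symm) tendsto_const_nhds
  · obtain ⟨N, hN⟩ := ENNReal.exists_nat_gt hx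
    refine tendsto_of_tendsto_of_tendsto_of_le_of_le'
      (g := fun _ => x) (h := fun k : ℕ => x + ((2 : ℝ≥0∞) ^ k)⁻¹) tendsto_const_nhds
      ?_ (Eventually.of_forall fun k => le_dya k x) ?_
    · have h1 : Tendsto (fun k : ℕ => ((2 : ℝ≥0∞) ^ k)⁻¹) atTop (𝓝 0) := by
        simp_rw [ENNReal.inv_pow]
        exact ENNReal.tendsto_pow_atTop_nhds_zero_of_lt_one
          (ENNReal.inv_lt_one.mpr (by norm_num))
      simpa using h1.const_add x
    ·
      filter_upwards [eventually_ge_atTop N] with k hk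
      have hxk : x ≤ (k : ℝ≥0∞) := (le_of_lt hN).trans (by exact_mod_cast hk)
      rw [dya, if_pos hxk]
      have hc : (⌈x.toReal * 2 ^ k⌉₊ : ℝ≥0∞) ≤ x * 2 ^ k + 1 := by
        rw [mul_two_pow_eq k hx, ← ENNReal.ofReal_one, ← ENNReal.ofReal_add (by positivity) (by norm_num),
          ← ENNReal.ofReal_natCast]
        exact ENNReal.ofReal_le_ofReal (le_of_lt (Nat.ceil_lt_add_one (by positivity)))
      calc ((⌈x.toReal * 2 ^ k⌉₊ : ℝ≥0∞)) / 2 ^ k ≤ (x * 2 ^ k + 1) / 2 ^ k := by gcongr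
        _ = x + ((2 : ℝ≥0∞) ^ k)⁻¹ := by
          rw [ENNReal.add_div, mul_div_assoc,
            ENNReal.div_self (two_pow_ne_zero k) (two_pow_ne_top k), mul_one, one_div]

variable {Ω : Type*} {m : MeasurableSpace Ω} {ℱ : Filtration ℝ≥0∞ m}

lemma stIff {σ : Ω → ℝ≥0∞} : IsStoppingTime ℱ (fun ω => (σ ω : WithTop ℝ≥0∞)) ↔
    ∀ t : ℝ≥0∞, MeasurableSet[ℱ t] {ω | σ ω ≤ t} := by
  simp only [IsStoppingTime, WithTop.coe_le_coe]

lemma msIff {σ : Ω → ℝ≥0∞} (hσ : IsStoppingTime ℱ (fun ω => (σ ω : WithTop ℝ≥0∞)))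
    (s : Set Ω) :
    MeasurableSet[hσ.measurableSpace] s ↔ ∀ t : ℝ≥0∞, MeasurableSet[ℱ t] (s ∩ {ω | σ ω ≤ t}) := by
  rw [IsStoppingTime.measurableSet]
  simp only [WithTop.coe_le_coe]
  constructor
  · exact fun h => h.2
  · intro h
    refine ⟨?_, h⟩
    have := h ⊤
    simp only [le_top, setOf_true, inter_univ] at this
    exact le_iSup (fun t => (ℱ t : MeasurableSpace Ω)) ⊤ s this

lemma isStoppingTime_dya {σ : Ω → ℝ≥0∞} (hσ : IsStoppingTime ℱ (fun ω => (σ ω : WithTop ℝ≥0∞))) (k : ℕ) :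
    IsStoppingTime ℱ fun ω => ((dya k (σ ω) : ℝ≥0∞) : WithTop ℝ≥0∞) := by
  rw [stIff]
  intro t
  by_cases ht : t = ⊤
  · subst ht
    have h : {ω | dya k (σ ω) ≤ ⊤} = univ := by
      ext ω; simp
    rw [h]
    exact MeasurableSet.univ
  · have h : {ω | dya k (σ ω) ≤ t}
        = {ω | σ ω ≤ min (k : ℝ≥0∞) ((⌊t.toReal * 2 ^ k⌋₊ : ℝ≥0∞) / 2 ^ k)} := by
      ext ω; exact dya_le_iff ht
    rw [h]
    exact ℱ.mono (dya_min_le ht) _ (stIff.mp hσ _)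

lemma countable_range_dya (σ : Ω → ℝ≥0∞) (k : ℕ) :
    (Set.range fun ω => dya k (σ ω)).Countable := by
  refine Set.Countable.mono ?_
    ((Set.countable_range fun n : ℕ => ((n : ℝ≥0∞) / 2 ^ k)).insert ⊤)
  rintro x ⟨ω, rfl⟩
  simp only [dya]
  split_ifs with h
  · exact Set.mem_insert_of_mem _ ⟨_, rfl⟩
  · exact Set.mem_insert _ _

/-- countable "rational" values in `ℝ≥0∞`. -/
def eq' (q : ℚ) : ℝ≥0∞ := ((Real.toNNReal q : ℝ≥0) : ℝ≥0∞)

lemma exists_q_btwn {a b : ℝ≥0∞} (h : a < b) : ∃ q : ℚ, a ≤ eq' q ∧ eq' q < b := by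
  by_cases hb : b = ⊤
  · subst hb
    obtain ⟨n, hn⟩ := ENNReal.exists_nat_gt h.ne_top
    refine ⟨n, hn.le.trans_eq ?_, ?_⟩
    · rw [eq']
      norm_num
    · rw [eq']
      exact ENNReal.coe_lt_top
  · obtain ⟨q, _, h1, h2⟩ := ENNReal.lt_iff_exists_rat_btwn.mp h
    exact ⟨q, h1.le, h2⟩

lemma inter_lt_mem {σ : Ω → ℝ≥0∞} (hσ : IsStoppingTime ℱ (fun ω => (σ ω : WithTop ℝ≥0∞))) {A : Set Ω}
    (hA : MeasurableSet[hσ.measurableSpace] A) (u : ℝ≥0∞) :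
    MeasurableSet[ℱ u] (A ∩ {ω | σ ω < u}) := by
  have h : A ∩ {ω | σ ω < u}
      = ⋃ q : {q : ℚ // eq' q < u}, A ∩ {ω | σ ω ≤ eq' (q : ℚ)} := by
    ext ω
    simp only [Set.mem_inter_iff, Set.mem_setOf_eq, Set.mem_iUnion]
    constructor
    · rintro ⟨hωA, hωσ⟩
      obtain ⟨q, hq1, hq2⟩ := exists_q_btwn hωσ
      exact ⟨⟨q, hq2⟩, hωA, hq1⟩
    · rintro ⟨⟨q, hq⟩, hωA, hωσ⟩
      exact ⟨hωA, lt_of_le_of_lt hωσ hq⟩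
  rw [h]
  refine MeasurableSet.iUnion fun q => ?_
  exact ℱ.mono q.2.le _ ((msIff hσ A).mp hA (eq' (q : ℚ)))

lemma inter_gt_mem {τ : Ω → ℝ≥0∞} (hτ : IsStoppingTime ℱ (fun ω => (τ ω : WithTop ℝ≥0∞))) {A : Set Ω} {t : ℝ≥0∞}
    (hA : MeasurableSet[ℱ t] A) :
    MeasurableSet[hτ.measurableSpace] (A ∩ {ω | t < τ ω}) := by
  rw [msIff]
  intro u
  by_cases hu : u ≤ t
  · have h : A ∩ {ω | t < τ ω} ∩ {ω | τ ω ≤ u} = ∅ := by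
      ext ω
      simp only [Set.mem_inter_iff, Set.mem_setOf_eq, Set.mem_empty_iff_false, iff_false]
      rintro ⟨⟨-, h1⟩, h2⟩
      exact absurd (h2.trans hu) (not_le.mpr h1)
    rw [h]
    exact @MeasurableSet.empty _ (ℱ u)
  · push_neg at hu
    have h1 : MeasurableSet[ℱ u] A := ℱ.mono hu.le _ hA
    have h2 : MeasurableSet[ℱ u] {ω | τ ω ≤ t} := ℱ.mono hu.le _ (stIff.mp hτ t)
    have h3 : MeasurableSet[ℱ u] {ω | t < τ ω} := by
      have h : {ω | t < τ ω} = {ω | τ ω ≤ t}ᶜ := by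
        ext ω; simp [not_le]
      rw [h]
      exact h2.compl
    exact (h1.inter h3).inter (stIff.mp hτ u)

variable {μ : Measure Ω}

lemma null_mem_stopping (hUC : UsualConditions ℱ μ) {τ : Ω → ℝ≥0∞}
    (hτ : IsStoppingTime ℱ (fun ω => (τ ω : WithTop ℝ≥0∞))) {s : Set Ω} (hs : μ s = 0) :
    MeasurableSet[hτ.measurableSpace] s := by
  rw [msIff]
  intro t
  exact hUC.2 t _ (measure_mono_null Set.inter_subset_left hs)

lemma os_key [IsProbabilityMeasure μ] (hUC : UsualConditions ℱ μ)
    {X : ℝ≥0∞ → Ω → ℝ} (hX : Martingale X ℱ μ)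
    (hrc : ∀ ω t, Tendsto (fun s => X s ω) (nhdsWithin t (Set.Ioi t)) (nhds (X t ω)))
    {σ : Ω → ℝ≥0∞} (hσ : IsStoppingTime ℱ (fun ω => (σ ω : WithTop ℝ≥0∞))) :
    (fun ω => X (σ ω) ω) =ᵐ[μ] μ[X ⊤ | hσ.measurableSpace] := by
  set Y : Ω → ℝ := fun ω => X (σ ω) ω with hYdef
  set τ : ℕ → Ω → ℝ≥0∞ := fun k ω => dya k (σ ω) with hτdef
  have hτ : ∀ k, IsStoppingTime ℱ (fun ω => (τ k ω : WithTop ℝ≥0∞)) := fun k => isStoppingTime_dya hσ k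
  have hστ : ∀ k ω, σ ω ≤ τ k ω := fun k ω => le_dya k (σ ω)
  set 𝒢 : ℕ → MeasurableSpace Ω := fun k => (hτ k).measurableSpace with h𝒢def
  have h𝒢m : ∀ k, 𝒢 k ≤ m := fun k => (hτ k).measurableSpace_le
  have hσm : hσ.measurableSpace ≤ m := hσ.measurableSpace_le
  have hσ𝒢 : ∀ k, hσ.measurableSpace ≤ 𝒢 k :=
    fun k => hσ.measurableSpace_mono (hτ k) (fun ω => WithTop.coe_le_coe.mpr (hστ k ω))
  have h𝒢anti : ∀ {j k : ℕ}, j ≤ k → 𝒢 k ≤ 𝒢 j :=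
    fun {j k} h => (hτ k).measurableSpace_mono (hτ j) fun ω => WithTop.coe_le_coe.mpr (dya_antitone (σ ω) h)
  set c : ℕ → Ω → ℝ := fun k => μ[X ⊤ | 𝒢 k] with hcdef
  have hint : Integrable (X ⊤) μ := hX.integrable ⊤
  have hos : ∀ k, stoppedValue X (fun ω => (τ k ω : WithTop ℝ≥0∞)) =ᵐ[μ] c k := fun k =>
    hX.stoppedValue_ae_eq_condExp_of_le_const_of_countable_range (hτ k)
      (fun _ => WithTop.coe_le_coe.mpr le_top) (by
        have := (countable_range_dya σ k).image (fun x : ℝ≥0∞ => (x : WithTop ℝ≥0∞))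
        rwa [← Set.range_comp] at this)
  have hpt : ∀ ω, Tendsto (fun k => X (τ k ω) ω) atTop (𝓝 (X (σ ω) ω)) := by
    intro ω
    have hIci : Tendsto (fun s => X s ω) (𝓝[Set.Ici (σ ω)] (σ ω)) (𝓝 (X (σ ω) ω)) := by
      have h1 : Set.Ici (σ ω) = insert (σ ω) (Set.Ioi (σ ω)) := by
        ext x
        simp [le_iff_lt_or_eq, or_comm, eq_comm]
      rw [h1, nhdsWithin_insert]
      rw [Filter.tendsto_sup]
      exact ⟨tendsto_pure_nhds _ _, hrc ω (σ ω)⟩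
    exact hIci.comp (tendsto_nhdsWithin_of_tendsto_nhds_of_eventually_within _
      (tendsto_dya (σ ω)) (Eventually.of_forall fun k => hστ k ω))
  have hcconv : ∀ᵐ ω ∂μ, Tendsto (fun k => c k ω) atTop (𝓝 (Y ω)) := by
    filter_upwards [ae_all_iff.mpr hos] with ω hω
    exact (hpt ω).congr fun k => hω k
  have haesmc : ∀ k, AEStronglyMeasurable (c k) μ := fun k =>
    (stronglyMeasurable_condExp.mono (h𝒢m k)).aestronglyMeasurable
  have hui : UniformIntegrable c 1 μ := hint.uniformIntegrable_condExp h𝒢m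
  have haesmY : AEStronglyMeasurable Y μ :=
    aestronglyMeasurable_of_tendsto_ae atTop haesmc hcconv
  obtain ⟨R, hR⟩ := hui.2.2
  have hmemY : MemLp Y 1 μ := by
    refine ⟨haesmY, ?_⟩
    calc eLpNorm Y 1 μ ≤ atTop.liminf fun k => eLpNorm (c k) 1 μ :=
        Lp.eLpNorm_lim_le_liminf_eLpNorm haesmc Y hcconv
      _ ≤ atTop.liminf fun _ => (R : ℝ≥0∞) :=
        Filter.liminf_le_liminf (Eventually.of_forall hR)
      _ = (R : ℝ≥0∞) := Filter.liminf_const _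
      _ < ⊤ := ENNReal.coe_lt_top
  have hintY : Integrable Y μ := memLp_one_iff_integrable.mp hmemY
  have hL1 : Tendsto (fun k => eLpNorm (c k - Y) 1 μ) atTop (𝓝 0) :=
    tendsto_Lp_finite_of_tendstoInMeasure le_rfl ENNReal.one_ne_top haesmc hmemY hui.2.1
      (tendstoInMeasure_of_tendsto_ae haesmc hcconv)
  have hsetint : ∀ s, MeasurableSet[hσ.measurableSpace] s →
      ∫ x in s, Y x ∂μ = ∫ x in s, X ⊤ x ∂μ := by
    intro s hs
    have h1 : ∀ k, ∫ x in s, c k x ∂μ = ∫ x in s, X ⊤ x ∂μ := fun k =>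
      setIntegral_condExp (h𝒢m k) hint (hσ𝒢 k s hs)
    have h2 : Tendsto (fun k => ∫ x in s, c k x ∂μ) atTop (𝓝 (∫ x in s, Y x ∂μ)) :=
      tendsto_setIntegral_of_L1' Y hintY.aestronglyMeasurable (Eventually.of_forall fun k => integrable_condExp) hL1 s
    rw [show (fun k => ∫ x in s, c k x ∂μ) = fun _ => ∫ x in s, X ⊤ x ∂μ from funext h1] at h2
    exact tendsto_nhds_unique h2 tendsto_const_nhds
  have hiInf : (⨅ k, 𝒢 k) ≤ hσ.measurableSpace := by
    intro s hs
    rw [MeasurableSpace.measurableSet_iInf] at hs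
    rw [msIff hσ]
    intro t
    by_cases ht : t = ⊤
    · subst ht
      have h : s ∩ {ω | σ ω ≤ ⊤} = s := by ext ω; simp
      rw [h]
      have h2 := (msIff (hτ 0) s).mp (hs 0) ⊤
      have h3 : s ∩ {ω | τ 0 ω ≤ ⊤} = s := by ext ω; simp
      rwa [h3] at h2
    · rw [hUC.1 t ⟨⊤, lt_top_iff_ne_top.mpr ht⟩]
      rw [MeasurableSpace.measurableSet_iInf]
      intro u
      rw [MeasurableSpace.measurableSet_iInf]
      intro hu
      have hdecomp : s ∩ {ω | σ ω ≤ t} = (⋃ k, s ∩ {ω | τ k ω < u}) ∩ {ω | σ ω ≤ t} := by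
        ext ω
        simp only [Set.mem_inter_iff, Set.mem_iUnion, Set.mem_setOf_eq]
        constructor
        · rintro ⟨hω, hσt⟩
          have hlt : σ ω < u := lt_of_le_of_lt hσt hu
          obtain ⟨k, hk⟩ := ((tendsto_dya (σ ω)).eventually_lt_const hlt).exists
          exact ⟨⟨k, hω, hk⟩, hσt⟩
        · rintro ⟨⟨k, hω, -⟩, hσt⟩
          exact ⟨hω, hσt⟩
      rw [hdecomp]
      exact MeasurableSet.inter (MeasurableSet.iUnion fun k => inter_lt_mem (hτ k) (hs k) u)
        (ℱ.mono (le_of_lt hu) _ (stIff.mp hσ t))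
  have hnullG : ∀ (k : ℕ) {s : Set Ω}, μ s = 0 → MeasurableSet[𝒢 k] s :=
    fun k s hs => null_mem_stopping hUC (hτ k) hs
  have htrim : ∀ j : ℕ, AEStronglyMeasurable[𝒢 j] Y (μ.trim (h𝒢m j)) := by
    intro j
    have hsm : ∀ k : ℕ, StronglyMeasurable[𝒢 j] (c (k + j)) := fun k =>
      stronglyMeasurable_condExp.mono (h𝒢anti (Nat.le_add_left j k))
    have hae : ∀ᵐ ω ∂(μ.trim (h𝒢m j)), Tendsto (fun k => c (k + j) ω) atTop (𝓝 (Y ω)) := by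
      rw [ae_iff]
      have hsub : {ω | ¬Tendsto (fun k => c (k + j) ω) atTop (𝓝 (Y ω))} ⊆
          {ω | ¬Tendsto (fun k => c k ω) atTop (𝓝 (Y ω))} := by
        intro ω hω hcon
        exact hω (hcon.comp (tendsto_add_atTop_nat j))
      have hnull : μ {ω | ¬Tendsto (fun k => c (k + j) ω) atTop (𝓝 (Y ω))} = 0 :=
        measure_mono_null hsub (ae_iff.mp hcconv)
      rw [trim_measurableSet_eq (h𝒢m j) (hnullG j hnull)]
      exact hnull
    exact aestronglyMeasurable_of_tendsto_ae atTop (fun k => (hsm k).aestronglyMeasurable) hae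
  have hgj : ∀ j : ℕ, ∃ g : Ω → ℝ, StronglyMeasurable[𝒢 j] g ∧ Y =ᵐ[μ] g := fun j =>
    ⟨(htrim j).mk Y, (htrim j).stronglyMeasurable_mk, ae_eq_of_ae_eq_trim (htrim j).ae_eq_mk⟩
  obtain ⟨g, hg0, hgY⟩ := hgj 0
  have hgmeas : ∀ j : ℕ, Measurable[𝒢 j] g := by
    intro j
    obtain ⟨gj, hgj_sm, hgjY⟩ := hgj j
    have hD : μ {ω | ¬g ω = gj ω} = 0 := ae_iff.mp (hgY.symm.trans hgjY)
    intro B hB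
    have hsplit : g ⁻¹' B =
        ((gj ⁻¹' B) ∩ {ω | ¬g ω = gj ω}ᶜ) ∪ (g ⁻¹' B ∩ {ω | ¬g ω = gj ω}) := by
      ext ω
      by_cases hωe : g ω = gj ω <;> simp [Set.mem_preimage, hωe]
    rw [hsplit]
    exact MeasurableSet.union ((hgj_sm.measurable hB).inter (hnullG j hD).compl)
      (hnullG j (measure_mono_null Set.inter_subset_right hD))
  have hgF : StronglyMeasurable[hσ.measurableSpace] g :=
    Measurable.stronglyMeasurable fun B hB =>
      hiInf _ (MeasurableSpace.measurableSet_iInf.mpr fun j => hgmeas j hB)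
  exact ae_eq_condExp_of_forall_setIntegral_eq hσm hint
    (fun s _ _ => hintY.integrableOn) (fun s hs _ => hsetint s hs) ⟨g, hgF, hgY⟩

end PST

namespace PST

variable {Ω : Type*} {m : MeasurableSpace Ω} {ℱ : Filtration ℝ≥0∞ m}

lemma preSigma_eq {T : Ω → ℝ≥0∞} {S : ℕ → Ω → ℝ≥0∞} (hS : ∀ n, IsStoppingTime ℱ (fun ω => (S n ω : WithTop ℝ≥0∞)))
    (hmono : ∀ ω, Monotone fun n => S n ω)
    (htend : ∀ ω, Tendsto (fun n => S n ω) atTop (nhds (T ω)))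
    (hlt : ∀ n ω, 0 < T ω → S n ω < T ω) :
    preSigma ℱ T = ⨆ n, (hS n).measurableSpace := by
  have hsup : ∀ ω, (⨆ n, S n ω) = T ω := fun ω =>
    tendsto_nhds_unique (tendsto_atTop_iSup (hmono ω)) (htend ω)
  have hSle : ∀ n ω, S n ω ≤ T ω := fun n ω => (hsup ω) ▸ le_iSup (fun n => S n ω) n
  have hS0 : ∀ n ω, T ω = 0 → S n ω = 0 := fun n ω h =>
    le_antisymm (by rw [← h]; exact hSle n ω) zero_le
  apply le_antisymm
  · rw [preSigma]
    refine sup_le ?_ (MeasurableSpace.generateFrom_le ?_)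
    · refine le_trans ?_ (le_iSup (fun n => (hS n).measurableSpace) 0)
      intro s hs
      rw [msIff (hS 0)]
      intro t
      exact (ℱ.mono (zero_le : 0 ≤ t) s hs).inter (stIff.mp (hS 0) t)
    · rintro s ⟨t, A, hA, rfl⟩
      have hdec : A ∩ {ω | t < T ω} = ⋃ n, A ∩ {ω | t < S n ω} := by
        ext ω
        simp only [Set.mem_inter_iff, Set.mem_setOf_eq, Set.mem_iUnion]
        constructor
        · rintro ⟨hω, hωt⟩
          obtain ⟨n, hn⟩ := ((htend ω).eventually_const_lt hωt).exists
          exact ⟨n, hω, hn⟩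
        · rintro ⟨n, hω, hn⟩
          exact ⟨hω, lt_of_lt_of_le hn (hSle n ω)⟩
      rw [hdec]
      refine MeasurableSet.iUnion fun n => ?_
      exact le_iSup (fun n => (hS n).measurableSpace) n _ (inter_gt_mem (hS n) hA)
  · refine iSup_le fun n => ?_
    intro s hs
    have hF0 : (ℱ 0 : MeasurableSpace Ω) ≤ preSigma ℱ T := le_sup_left
    have hgen : ∀ {u : Set Ω},
        u ∈ {s | ∃ t : ℝ≥0∞, ∃ A : Set Ω, MeasurableSet[ℱ t] A ∧ s = A ∩ {ω | t < T ω}} →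
        MeasurableSet[preSigma ℱ T] u := fun hu =>
      (le_sup_right : MeasurableSpace.generateFrom _ ≤ preSigma ℱ T) _
        (MeasurableSpace.measurableSet_generateFrom hu)
    have h0T : MeasurableSet[preSigma ℱ T] {ω | 0 < T ω} :=
      hgen ⟨0, Set.univ, MeasurableSet.univ, (Set.univ_inter _).symm⟩
    have hsmem := (msIff (hS n) s).mp hs
    have h1 : MeasurableSet[preSigma ℱ T] (s ∩ {ω | 0 < T ω}) := by
      have hdec : s ∩ {ω | 0 < T ω} =
          (⋃ q : ℚ, (s ∩ {ω | S n ω ≤ eq' q}) ∩ {ω | eq' q < T ω}) ∩ {ω | 0 < T ω} := by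
        ext ω
        simp only [Set.mem_inter_iff, Set.mem_setOf_eq, Set.mem_iUnion]
        constructor
        · rintro ⟨hω, hpos⟩
          obtain ⟨q, hq1, hq2⟩ := exists_q_btwn (hlt n ω hpos)
          exact ⟨⟨q, ⟨hω, hq1⟩, hq2⟩, hpos⟩
        · rintro ⟨⟨q, ⟨hω, -⟩, -⟩, hpos⟩
          exact ⟨hω, hpos⟩
      rw [hdec]
      refine MeasurableSet.inter (MeasurableSet.iUnion fun q => ?_) h0T
      exact hgen ⟨eq' q, s ∩ {ω | S n ω ≤ eq' q}, hsmem (eq' q), rfl⟩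
    have h2 : MeasurableSet[preSigma ℱ T] (s ∩ {ω | 0 < T ω}ᶜ) := by
      have hdec : s ∩ {ω | 0 < T ω}ᶜ = (s ∩ {ω | S n ω ≤ 0}) ∩ {ω | 0 < T ω}ᶜ := by
        ext ω
        simp only [Set.mem_inter_iff, Set.mem_compl_iff, Set.mem_setOf_eq]
        constructor
        · rintro ⟨hω, hc⟩
          have hT0 : T ω = 0 := le_zero_iff.mp (not_lt.mp hc)
          exact ⟨⟨hω, (hS0 n ω hT0).le⟩, hc⟩
        · rintro ⟨⟨hω, -⟩, hc⟩
          exact ⟨hω, hc⟩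
      rw [hdec]
      exact (hF0 _ (hsmem 0)).inter h0T.compl
    have h := h1.union h2
    rwa [Set.inter_union_compl] at h

end PST

end

/-- **Predictable stopping theorem.** For a right-continuous uniformly integrable martingale
`X` (indexed by `[0,∞]`, with `X ⊤ = X_∞`) and a predictable stopping time `T`, the left
limit `X_{T-}` satisfies `X_{T-} = E[X_T | F_{T-}] = E[X_∞ | F_{T-}]` a.s. -/
theorem predictable_stopping_theorem
    {Ω : Type*} {m : MeasurableSpace Ω} {μ : Measure Ω} [IsProbabilityMeasure μ]
    (ℱ : Filtration ℝ≥0∞ m) (hUC : UsualConditions ℱ μ)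
    (X : ℝ≥0∞ → Ω → ℝ) (hX : Martingale X ℱ μ) (hUI : UniformIntegrable X 1 μ)
    (hrc : ∀ ω t, Tendsto (fun s => X s ω) (nhdsWithin t (Set.Ioi t)) (nhds (X t ω)))
    (T : Ω → ℝ≥0∞) (hT : IsPredictableStoppingTime ℱ T)
    (Xm : Ω → ℝ)
    (hXm0 : ∀ ω, T ω = 0 → Xm ω = X 0 ω)
    (hXm : ∀ ω, T ω ≠ 0 →
      Tendsto (fun s => X s ω) (nhdsWithin (T ω) (Set.Iio (T ω))) (nhds (Xm ω))) :
    Xm =ᵐ[μ] μ[(fun ω => X (T ω) ω) | preSigma ℱ T] ∧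
    Xm =ᵐ[μ] μ[X ⊤ | preSigma ℱ T] := by
  obtain ⟨hTst, S, hS, hmono, htend, hlt⟩ := hT
  have hsup : ∀ ω, (⨆ n, S n ω) = T ω := fun ω =>
    tendsto_nhds_unique (tendsto_atTop_iSup (hmono ω)) (htend ω)
  have hSle : ∀ n ω, S n ω ≤ T ω := fun n ω => (hsup ω) ▸ le_iSup (fun n => S n ω) n
  have hS0 : ∀ n ω, T ω = 0 → S n ω = 0 := fun n ω h =>
    le_antisymm (by rw [← h]; exact hSle n ω) zero_le
  have hpre := PST.preSigma_eq hS hmono htend hlt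
  set 𝒢 : ℕ → MeasurableSpace Ω := fun n => (hS n).measurableSpace with h𝒢def
  let 𝒢F : Filtration ℕ m := {
    seq := 𝒢
    mono' := fun i j hij => (hS i).measurableSpace_mono (hS j) fun ω => WithTop.coe_le_coe.mpr (hmono ω hij)
    le' := fun n => (hS n).measurableSpace_le }
  have hos_n : ∀ n, (fun ω => X (S n ω) ω) =ᵐ[μ] μ[X ⊤ | 𝒢 n] := fun n =>
    PST.os_key hUC hX hrc (hS n)
  have hlevy : ∀ᵐ ω ∂μ, Tendsto (fun n => (μ[X ⊤|𝒢F n]) ω) atTop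
      (𝓝 ((μ[X ⊤|⨆ n, (𝒢F n : MeasurableSpace Ω)]) ω)) :=
    tendsto_ae_condExp (X ⊤)
  have hcondeq : μ[X ⊤|⨆ n, (𝒢F n : MeasurableSpace Ω)] = μ[X ⊤|preSigma ℱ T] := by
    have hsup𝒢 : (⨆ n, (𝒢F n : MeasurableSpace Ω)) = preSigma ℱ T := hpre.symm
    rw [hsup𝒢]
  have hpt : ∀ ω, Tendsto (fun n => X (S n ω) ω) atTop (𝓝 (Xm ω)) := by
    intro ω
    by_cases h0 : T ω = 0
    · have h : ∀ n, X (S n ω) ω = Xm ω := fun n => by rw [hS0 n ω h0, ← hXm0 ω h0]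
      exact Tendsto.congr (fun n => (h n).symm) tendsto_const_nhds
    · refine (hXm ω h0).comp (tendsto_nhdsWithin_of_tendsto_nhds_of_eventually_within _
        (htend ω) (Eventually.of_forall fun n => ?_))
      exact hlt n ω (pos_iff_ne_zero.mpr h0)
  have hkey : Xm =ᵐ[μ] μ[X ⊤|preSigma ℱ T] := by
    filter_upwards [hlevy, ae_all_iff.mpr hos_n] with ω hω1 hω2
    have h1 : Tendsto (fun n => (μ[X ⊤|𝒢 n]) ω) atTop (𝓝 (Xm ω)) :=
      (hpt ω).congr fun n => hω2 n
    have h2 := tendsto_nhds_unique h1 hω1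
    rw [← hcondeq]
    exact h2
  refine ⟨?_, hkey⟩
  have hos_T : (fun ω => X (T ω) ω) =ᵐ[μ] μ[X ⊤ | hTst.measurableSpace] :=
    PST.os_key hUC hX hrc hTst
  have hTm : hTst.measurableSpace ≤ m := hTst.measurableSpace_le
  have hle : preSigma ℱ T ≤ hTst.measurableSpace := by
    rw [hpre]
    exact iSup_le fun n => (hS n).measurableSpace_mono hTst fun ω => WithTop.coe_le_coe.mpr (hSle n ω)
  have h1 : μ[(fun ω => X (T ω) ω)|preSigma ℱ T]
      =ᵐ[μ] μ[μ[X ⊤|hTst.measurableSpace]|preSigma ℱ T] := condExp_congr_ae hos_T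
  have h2 : μ[μ[X ⊤|hTst.measurableSpace]|preSigma ℱ T] =ᵐ[μ] μ[X ⊤|preSigma ℱ T] :=
    condExp_condExp_of_le hle hTm
  exact hkey.trans (h1.trans h2).symm
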